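/- Let M be a matroid on a finite set E, let C be a family of non-spanning circuits of M, and let N be the free erection of M. If every cyclic flat of M is a union of circuits in C, then every cyclic flat of N is a union of circuits in C. -/

import Mathlib

open Set Matroid

variable {α : Type*}

/-- A circuit of a matroid: a minimal dependent subset of the ground set. -/
def IsCircuit (M : Matroid α) (C : Set α) : Prop :=
  C ⊆ M.E ∧ ¬ M.Indep C ∧ ∀ e ∈ C, M.Indep (C \ {e})

/-- The (natural-number) rank of a set in a matroid: the size of a largest
independent subset. -/
noncomputable def nr (M : Matroid α) (X : Set α) : ℕ :=
  sSup {k | ∃ I, I ⊆ X ∧ M.Indep I ∧ I.ncard = k}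

/-- The rank of a matroid. -/
noncomputable def mrk (M : Matroid α) : ℕ := nr M M.E

/-- A cyclic set: a (possibly empty) union of circuits. -/
def Cyclic (M : Matroid α) (X : Set α) : Prop :=
  X ⊆ M.E ∧ ∀ e ∈ X, ∃ C, _root_.IsCircuit M C ∧ C ⊆ X ∧ e ∈ C

/-- A modular pair of sets in a matroid. -/
def ModPair (M : Matroid α) (X Y : Set α) : Prop :=
  nr M X + nr M Y = nr M (X ∩ Y) + nr M (X ∪ Y)

/-- A coloop of a matroid: an element contained in every base. -/
def IsColoop (M : Matroid α) (e : α) : Prop := ∀ B, M.IsBase B → e ∈ B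

/-- `M` is the truncation of `N`: the two matroids have the same ground set and
`r_M(X) = min (r_N(X), r_N(E) − 1)` for every `X ⊆ E`. -/
def IsTruncationOf (M N : Matroid α) : Prop :=
  M.E = N.E ∧ ∀ X ⊆ M.E, nr M X = min (nr N X) (mrk N - 1)

/-- `N` is an erection of `M`: either the trivial erection `N = M`, or `M` is the
truncation of `N`. -/
def IsErectionOf (N M : Matroid α) : Prop := N = M ∨ IsTruncationOf M N

/-- `N` is the free erection of `M`: it is an erection of `M` that is maximum in the
weak order among all erections of `M`. -/
def IsFreeErectionOf (N M : Matroid α) : Prop :=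
  IsErectionOf N M ∧ ∀ N', IsErectionOf N' M → ∀ I, N'.Indep I → N.Indep I

/-- A modular cyclic family in `M`: a family of cyclic sets that is down-closed in
the lattice of cyclic sets and closed under unions of modular pairs. -/
def ModularCyclicFamily (M : Matroid α) (𝓕 : Set (Set α)) : Prop :=
  (∀ C ∈ 𝓕, Cyclic M C) ∧
  (∀ C ∈ 𝓕, ∀ D, Cyclic M D → D ⊆ C → D ∈ 𝓕) ∧
  (∀ C ∈ 𝓕, ∀ D ∈ 𝓕, ModPair M C D → C ∪ D ∈ 𝓕)

/-- The modular cyclic closure of a family `𝓒` of cyclic sets: the smallest modular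
cyclic family containing `𝓒`. -/
def mcClosure (M : Matroid α) (𝓒 : Set (Set α)) : Set (Set α) :=
  {X | ∀ 𝓕, ModularCyclicFamily M 𝓕 → 𝓒 ⊆ 𝓕 → X ∈ 𝓕}

/-- The family of non-spanning cyclic flats of `M`. -/
def nsCyclicFlats (M : Matroid α) : Set (Set α) :=
  {C | Cyclic M C ∧ M.IsFlat C ∧ ¬ M.Spanning C}

/-- A hyperplane of `M`: a flat of rank `r(M) − 1`. -/
def IsHyperplane (M : Matroid α) (Z : Set α) : Prop :=
  M.IsFlat Z ∧ nr M Z + 1 = mrk M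

/-
Let `M` be the truncation of `N` with `r(N) = r(M) + 1`; the closures of `M` and `N` agree on
sets that do not span `M`. Take a cyclic flat `F ≠ E` of `N` and `e ∈ F`, so `e ∈ cl_M(F - e)`.
If `F` does not span `M`, then `F - e` is a non-spanning set spanning `e`. Otherwise
`F = cl_N(B)` for a base `B` of `M`. The map `B ↦ cl_N(B)` selects the hyperplanes of an erection
(a block function), and so does the map sending `B` to the largest set between `B` and `cl_N(B)`
in which every element on a circuit lies on a non-spanning circuit: such sets are closed under
unions through a common base and under adjoining closures of non-spanning subsets. The erection
built from the smaller block function is dominated by the free erection `N`, which forces the two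
maps to agree. Either way `e` lies on a non-spanning circuit `C` of `M` with
`cl_M(C) = cl_N(C) ⊆ F`, and the hypothesis applies to the cyclic flat `cl_M(C)`.
-/
section Rank

variable {M : Matroid α} [M.Finite] {B I X Y : Set α} {e : α}

lemma nr_eq_ncard_of_isBasis' (hI : M.IsBasis' I X) : nr M X = I.ncard := by
  refine IsGreatest.csSup_eq ⟨⟨I, hI.subset, hI.indep, rfl⟩, ?_⟩
  rintro k ⟨J, hJX, hJ, rfl⟩
  have hle : J.encard ≤ I.encard := (hJ.encard_le_eRk_of_subset hJX).trans hI.encard_eq_eRk.ge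
  rwa [← (M.set_finite J hJ.subset_ground).cast_ncard_eq,
    ← (M.set_finite I hI.indep.subset_ground).cast_ncard_eq, Nat.cast_le] at hle

lemma cast_nr (M : Matroid α) [M.Finite] (X : Set α) : (nr M X : ℕ∞) = M.eRk X := by
  obtain ⟨I, hI⟩ := M.exists_isBasis' X
  rw [nr_eq_ncard_of_isBasis' hI, ← hI.encard_eq_eRk,
    (M.set_finite I hI.indep.subset_ground).cast_ncard_eq]

lemma cast_mrk (M : Matroid α) [M.Finite] : (mrk M : ℕ∞) = M.eRank := by
  rw [mrk, cast_nr, eRk_ground]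

lemma nr_mono (hXY : X ⊆ Y) : nr M X ≤ nr M Y := by
  simpa only [← cast_nr, Nat.cast_le] using M.eRk_mono hXY

lemma nr_le_mrk (M : Matroid α) [M.Finite] (X : Set α) : nr M X ≤ mrk M := by
  simpa only [← cast_nr, ← cast_mrk, Nat.cast_le] using M.eRk_le_eRank X

lemma nr_le_ncard (hX : X.Finite) : nr M X ≤ X.ncard := by
  simpa only [← cast_nr, ← hX.cast_ncard_eq, Nat.cast_le] using M.eRk_le_encard X

lemma nr_closure (M : Matroid α) [M.Finite] (X : Set α) : nr M (M.closure X) = nr M X := by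
  simpa only [← cast_nr, Nat.cast_inj] using M.eRk_closure_eq X

lemma nr_le_nr_diff_singleton_add_one (M : Matroid α) [M.Finite] (X : Set α) (e : α) :
    nr M X ≤ nr M (X \ {e}) + 1 := by
  have h := (M.eRk_mono (subset_insert_sdiff_singleton e X)).trans (M.eRk_insert_le_add_one e _)
  rwa [← cast_nr, ← cast_nr, ← Nat.cast_one, ← Nat.cast_add, Nat.cast_le] at h

lemma Matroid.Indep.ncard_le_nr (hI : M.Indep I) (hIX : I ⊆ X) : I.ncard ≤ nr M X := by
  have h := hI.encard_le_eRk_of_subset hIX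
  rwa [← cast_nr, ← (M.set_finite I hI.subset_ground).cast_ncard_eq, Nat.cast_le] at h

lemma Matroid.Indep.nr_eq (hI : M.Indep I) : nr M I = I.ncard :=
  nr_eq_ncard_of_isBasis' hI.isBasis_self.isBasis'

lemma Matroid.Indep.ncard_le_mrk (hI : M.Indep I) : I.ncard ≤ mrk M :=
  hI.ncard_le_nr hI.subset_ground

lemma Matroid.IsBase.ncard_eq_mrk (hB : M.IsBase B) : B.ncard = mrk M :=
  (nr_eq_ncard_of_isBasis' hB.isBasis_ground.isBasis').symm

lemma indep_iff_nr_eq_ncard (hI : I ⊆ M.E) : M.Indep I ↔ nr M I = I.ncard := by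
  have hfin := M.set_finite I hI
  rw [indep_iff_eRk_eq_encard_of_finite hfin, ← cast_nr, ← hfin.cast_ncard_eq, Nat.cast_inj]

lemma spanning_iff_nr_eq_mrk (hX : X ⊆ M.E) : M.Spanning X ↔ nr M X = mrk M := by
  rw [spanning_iff_eRk_le hX, ← cast_nr, ← cast_mrk, Nat.cast_le]
  exact ⟨fun h => (nr_le_mrk M X).antisymm h, Eq.ge⟩

lemma mem_closure_iff_nr_insert (he : e ∈ M.E) :
    e ∈ M.closure X ↔ nr M (insert e X) = nr M X := by
  refine ⟨fun h => ?_, fun h => by_contra fun hcl => ?_⟩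
  · refine (nr_mono (subset_insert e X)).antisymm' ?_
    rw [← nr_closure M X, ← nr_closure M (insert e X), closure_insert_eq_of_mem_closure h]
  · have h' := M.eRk_insert_eq_add_one ⟨he, hcl⟩
    rw [← cast_nr, ← cast_nr, h, ← Nat.cast_one, ← Nat.cast_add, Nat.cast_inj] at h'
    omega

lemma closure_eq_closure_of_nr_le (hXY : X ⊆ Y) (h : nr M Y ≤ nr M X) :
    M.closure X = M.closure Y :=
  (M.isRkFinite_set X).closure_eq_closure_of_subset_of_eRk_ge_eRk hXY
    (by rwa [← cast_nr, ← cast_nr, Nat.cast_le])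

end Rank

section Cyclic

variable {M : Matroid α} {C F : Set α} {e : α}

lemma isCircuit_iff_matroidIsCircuit : _root_.IsCircuit M C ↔ M.IsCircuit C := by
  rw [isCircuit_iff_dep_forall_sdiff_singleton_indep, Dep, _root_.IsCircuit]
  tauto

lemma Cyclic.mem_closure_diff_singleton (hF : Cyclic M F) (he : e ∈ F) :
    e ∈ M.closure (F \ {e}) := by
  obtain ⟨C, hC, hCF, heC⟩ := hF.2 e he
  exact M.closure_subset_closure (sdiff_subset_sdiff_left hCF)
    ((isCircuit_iff_matroidIsCircuit.1 hC).mem_closure_sdiff_singleton_of_mem heC)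

lemma Matroid.IsCircuit.cyclic_closure (hC : M.IsCircuit C) : Cyclic M (M.closure C) := by
  refine ⟨M.closure_subset_ground C, fun x hx => ?_⟩
  have hCcl := M.subset_closure C hC.subset_ground
  by_cases hxC : x ∈ C
  · exact ⟨C, isCircuit_iff_matroidIsCircuit.2 hC, hCcl, hxC⟩
  obtain ⟨C', hC'C, hC', hxC'⟩ := exists_isCircuit_of_mem_closure hx hxC
  exact ⟨C', isCircuit_iff_matroidIsCircuit.2 hC', hC'C.trans (insert_subset hx hCcl), hxC'⟩

end Cyclic

section Truncation

variable {M N : Matroid α} {I X : Set α}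

lemma IsTruncationOf.mrk_eq (hT : IsTruncationOf M N) : mrk M = mrk N - 1 := by
  have h := hT.2 M.E subset_rfl
  rw [hT.1] at h
  rw [mrk, hT.1, h, mrk]
  omega

variable [M.Finite] [N.Finite]

lemma IsTruncationOf.indep_iff (hT : IsTruncationOf M N) :
    M.Indep I ↔ N.Indep I ∧ I.ncard ≤ mrk M := by
  by_cases hIE : I ⊆ M.E
  · have hIN : I ⊆ N.E := hT.1 ▸ hIE
    rw [indep_iff_nr_eq_ncard hIE, indep_iff_nr_eq_ncard hIN, hT.2 I hIE, hT.mrk_eq]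
    have := nr_le_ncard (M := N) (N.set_finite I hIN)
    omega
  · exact iff_of_false (fun h => hIE h.subset_ground)
      (fun h => hIE (hT.1 ▸ h.1.subset_ground))

lemma IsTruncationOf.indep (hT : IsTruncationOf M N) (hI : M.Indep I) : N.Indep I :=
  (hT.indep_iff.1 hI).1

lemma IsTruncationOf.eq_or_mrk_eq (hT : IsTruncationOf M N) : M = N ∨ mrk N = mrk M + 1 := by
  have h := hT.mrk_eq
  refine (Nat.eq_zero_or_pos (mrk N)).imp (fun h0 => ?_) (by omega)
  refine ext_indep hT.1 fun I _ => ?_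
  rw [hT.indep_iff, and_iff_left_iff_imp]
  intro hI
  have := hI.ncard_le_mrk
  omega

lemma IsTruncationOf.closure_subset_closure (hT : IsTruncationOf M N) (hX : X ⊆ M.E) :
    N.closure X ⊆ M.closure X := by
  intro y hy
  have hyE : y ∈ M.E := hT.1 ▸ N.mem_ground_of_mem_closure hy
  rw [mem_closure_iff_nr_insert (hT.1 ▸ hyE)] at hy
  rw [mem_closure_iff_nr_insert hyE, hT.2 _ (insert_subset hyE hX), hT.2 X hX, hy]

lemma IsTruncationOf.closure_subset_closure_of_not_spanning (hT : IsTruncationOf M N)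
    (hX : X ⊆ M.E) (hXs : ¬ M.Spanning X) : M.closure X ⊆ N.closure X := by
  intro y hy
  have hyE : y ∈ M.E := M.mem_ground_of_mem_closure hy
  have hlt : nr M X < mrk M :=
    (nr_le_mrk M X).lt_of_ne (mt (spanning_iff_nr_eq_mrk hX).2 hXs)
  rw [mem_closure_iff_nr_insert hyE] at hy
  rw [mem_closure_iff_nr_insert (hT.1 ▸ hyE)]
  have h1 := hT.2 _ (insert_subset hyE hX)
  have h2 := hT.2 X hX
  have := hT.mrk_eq
  omega

lemma IsTruncationOf.cyclic_ground (hT : IsTruncationOf M N) : Cyclic M M.E := by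
  refine ⟨subset_rfl, fun x hx => ?_⟩
  have hsp : M.Spanning (M.E \ {x}) := by
    have h := nr_le_nr_diff_singleton_add_one N N.E x
    rw [spanning_iff_nr_eq_mrk sdiff_subset, hT.2 _ sdiff_subset, hT.mrk_eq, hT.1]
    rw [← mrk] at h
    omega
  obtain ⟨C, -, hC, hxC⟩ :=
    exists_isCircuit_of_mem_closure (hsp.closure_eq ▸ hx) (fun h => h.2 rfl)
  exact ⟨C, isCircuit_iff_matroidIsCircuit.2 hC, hC.subset_ground, hxC⟩

lemma isTruncationOf_of_indep_iff (hE : M.E = N.E) (hmrk : mrk N = mrk M + 1)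
    (hI : ∀ I, M.Indep I ↔ N.Indep I ∧ I.ncard ≤ mrk M) : IsTruncationOf M N := by
  refine ⟨hE, fun X hX => le_antisymm ?_ ?_⟩
  · obtain ⟨I, hIX⟩ := M.exists_isBasis' X
    rw [nr_eq_ncard_of_isBasis' hIX, hmrk, Nat.add_sub_cancel]
    exact le_min (((hI I).1 hIX.indep).1.ncard_le_nr hIX.subset) hIX.indep.ncard_le_mrk
  · obtain ⟨J, hJX⟩ := N.exists_isBasis' X
    obtain ⟨K, hKJ, hK⟩ := exists_subset_card_eq (min_le_left J.ncard (mrk M))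
    have hKM : M.Indep K := (hI K).2 ⟨hJX.indep.subset hKJ, hK ▸ min_le_right _ _⟩
    rw [nr_eq_ncard_of_isBasis' hJX, hmrk, Nat.add_sub_cancel, ← hK]
    exact hKM.ncard_le_nr (hKJ.trans hJX.subset)

end Truncation

/-- `h B` plays the role of the hyperplane spanned by the base `B` of `M` in an erection of `M`. -/
structure IsBlockFunction (M : Matroid α) (h : Set α → Set α) : Prop where
  subset : ∀ ⦃B⦄, M.IsBase B → B ⊆ h B
  subset_ground : ∀ ⦃B⦄, M.IsBase B → h B ⊆ M.E
  ne_ground : ∀ ⦃B⦄, M.IsBase B → h B ≠ M.E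
  closure_subset : ∀ ⦃B A⦄, M.IsBase B → A ⊆ h B → ¬ M.Spanning A → M.closure A ⊆ h B
  eq_of_subset : ∀ ⦃B B'⦄, M.IsBase B → M.IsBase B' → B' ⊆ h B → h B' = h B

def ErectionIndep (M : Matroid α) (h : Set α → Set α) (I : Set α) : Prop :=
  M.Indep I ∨ ∃ B x, M.IsBase B ∧ x ∈ M.E ∧ x ∉ h B ∧ I = insert x B

lemma ErectionIndep.subset_ground {M : Matroid α} {h : Set α → Set α} {I : Set α}
    (hI : ErectionIndep M h I) : I ⊆ M.E := by
  obtain hI | ⟨B, x, hB, hxE, -, rfl⟩ := hI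
  exacts [hI.subset_ground, insert_subset hxE hB.subset_ground]

namespace IsBlockFunction

variable {M : Matroid α} {h : Set α → Set α} {B I J : Set α} {x f : α}

lemma notMem_of_notMem_apply (hh : IsBlockFunction M h) (hB : M.IsBase B) (hx : x ∉ h B) :
    x ∉ B :=
  fun hxB => hx (hh.subset hB hxB)

lemma indep_insert_diff_singleton (hh : IsBlockFunction M h) (hB : M.IsBase B) (hxE : x ∈ M.E)
    (hx : x ∉ h B) (hf : f ∈ B) : M.Indep (insert x B \ {f}) := by
  have hxf : x ∉ ({f} : Set α) := fun hxf => hh.notMem_of_notMem_apply hB hx (hxf ▸ hf)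
  have hBf := hB.indep.sdiff {f}
  have hBf_ns : ¬ M.Spanning (B \ {f}) := fun hsp =>
    hB.indep.notMem_closure_sdiff_of_mem hf (hsp.closure_eq ▸ hB.subset_ground hf)
  rw [insert_sdiff_of_notMem _ hxf, hBf.insert_indep_iff]
  refine Or.inl ⟨hxE, fun hxcl => hx ?_⟩
  exact hh.closure_subset hB (sdiff_subset.trans (hh.subset hB)) hBf_ns hxcl

lemma erectionIndep_subset (hh : IsBlockFunction M h) (hJ : ErectionIndep M h J) (hIJ : I ⊆ J) :
    ErectionIndep M h I := by
  obtain hJ | ⟨B, x, hB, hxE, hx, rfl⟩ := hJ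
  · exact Or.inl (hJ.subset hIJ)
  obtain rfl | ⟨f, hfJ, hfI⟩ := hIJ.eq_or_ssubset.imp id exists_of_ssubset
  · exact Or.inr ⟨B, x, hB, hxE, hx, rfl⟩
  refine Or.inl (Indep.subset ?_ (subset_sdiff_singleton hIJ hfI))
  obtain rfl | hfB := hfJ
  · rw [insert_sdiff_self_of_notMem (hh.notMem_of_notMem_apply hB hx)]
    exact hB.indep
  · exact hh.indep_insert_diff_singleton hB hxE hx hfB

lemma ncard_insert_eq [M.Finite] (hh : IsBlockFunction M h) (hB : M.IsBase B) (hx : x ∉ h B) :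
    (insert x B).ncard = mrk M + 1 := by
  rw [ncard_insert_of_notMem (hh.notMem_of_notMem_apply hB hx) (M.set_finite B hB.subset_ground),
    hB.ncard_eq_mrk]

lemma erectionIndep_aug [M.Finite] (hh : IsBlockFunction M h) (hI : ErectionIndep M h I)
    (hJ : ErectionIndep M h J) (hlt : I.ncard < J.ncard) :
    ∃ e ∈ J, e ∉ I ∧ ErectionIndep M h (insert e I) := by
  obtain hI | ⟨B, x, hB, -, hx, rfl⟩ := hI
  swap
  · obtain hJ | ⟨B', x', hB', -, hx', rfl⟩ := hJ
    · have := hJ.ncard_le_mrk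
      rw [hh.ncard_insert_eq hB hx] at hlt
      omega
    · rw [hh.ncard_insert_eq hB hx, hh.ncard_insert_eq hB' hx'] at hlt
      exact absurd hlt (lt_irrefl _)
  obtain hJ | ⟨B, x, hB, hxE, hx, rfl⟩ := hJ
  · have hfin := fun {K} (hK : M.Indep K) => M.set_finite K hK.subset_ground
    obtain ⟨e, he, heI⟩ := hI.augment hJ
      (by rwa [← (hfin hI).cast_ncard_eq, ← (hfin hJ).cast_ncard_eq, Nat.cast_lt])
    exact ⟨e, he.1, he.2, Or.inl heI⟩
  by_cases hIB : M.IsBase I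
  · by_cases hJI : insert x B ⊆ h I
    · exact absurd (hh.eq_of_subset hIB hB ((subset_insert x B).trans hJI) ▸ hJI (mem_insert x B))
        hx
    obtain ⟨y, hyJ, hyI⟩ := not_subset.1 hJI
    exact ⟨y, hyJ, hh.notMem_of_notMem_apply hIB hyI,
      Or.inr ⟨I, y, hIB, (insert_subset hxE hB.subset_ground) hyJ, hyI, rfl⟩⟩
  obtain ⟨e, he, heI⟩ := hI.exists_insert_of_not_isBase hIB hB
  exact ⟨e, mem_insert_of_mem x he.1, he.2, Or.inl heI⟩

noncomputable def erection [M.Finite] (hh : IsBlockFunction M h) : Matroid α :=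
  (IndepMatroid.ofFinite M.ground_finite (ErectionIndep M h) (Or.inl M.empty_indep)
    (fun _ _ hJ hIJ => hh.erectionIndep_subset hJ hIJ) (fun _ _ => hh.erectionIndep_aug)
    (fun _ => ErectionIndep.subset_ground)).matroid

variable [M.Finite] (hh : IsBlockFunction M h)

@[simp] lemma erection_indep_iff : hh.erection.Indep I ↔ ErectionIndep M h I := Iff.rfl

instance : hh.erection.Finite := ⟨M.ground_finite⟩

lemma erection_indep_insert (hB : M.IsBase B) (hxE : x ∈ M.E) (hx : x ∉ h B) :
    hh.erection.Indep (insert x B) :=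
  hh.erection_indep_iff.2 (Or.inr ⟨B, x, hB, hxE, hx, rfl⟩)

lemma mrk_erection : mrk hh.erection = mrk M + 1 := by
  refine le_antisymm ?_ ?_
  · obtain ⟨I, hI⟩ := hh.erection.exists_isBasis' hh.erection.E
    rw [mrk, nr_eq_ncard_of_isBasis' hI]
    obtain hIM | ⟨B, x, hB, -, hx, rfl⟩ := hh.erection_indep_iff.1 hI.indep
    · exact hIM.ncard_le_mrk.trans (Nat.le_succ _)
    · exact (hh.ncard_insert_eq hB hx).le
  · obtain ⟨B, hB⟩ := M.exists_isBase
    obtain ⟨x, hxE, hx⟩ := exists_of_ssubset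
      ((hh.subset_ground hB).ssubset_of_ne (hh.ne_ground hB))
    rw [← hh.ncard_insert_eq hB hx]
    exact (hh.erection_indep_insert hB hxE hx).ncard_le_mrk

lemma isTruncationOf_erection : IsTruncationOf M hh.erection := by
  refine isTruncationOf_of_indep_iff rfl hh.mrk_erection fun I => ?_
  rw [erection_indep_iff]
  refine ⟨fun hI => ⟨Or.inl hI, hI.ncard_le_mrk⟩, fun ⟨hI, hIc⟩ => ?_⟩
  obtain hI | ⟨B, x, hB, -, hx, rfl⟩ := hI
  · exact hI
  · rw [hh.ncard_insert_eq hB hx] at hIc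
    omega

end IsBlockFunction

section

variable {M N : Matroid α} [M.Finite] [N.Finite] {B F : Set α}

lemma IsTruncationOf.nr_eq_of_isBase (hT : IsTruncationOf M N) (hB : M.IsBase B) :
    nr N B = mrk M := by
  rw [(hT.indep hB.indep).nr_eq, hB.ncard_eq_mrk]

lemma IsTruncationOf.isBlockFunction_closure (hT : IsTruncationOf M N)
    (hmrk : mrk N = mrk M + 1) : IsBlockFunction M N.closure where
  subset B hB := N.subset_closure B (hT.1 ▸ hB.subset_ground)
  subset_ground B _ := hT.1 ▸ N.closure_subset_ground B
  ne_ground B hB hcl := by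
    have h := nr_closure N B
    rw [hcl, hT.1, ← mrk, hT.nr_eq_of_isBase hB] at h
    omega
  closure_subset B A _ hA hAs := by
    have hAE : A ⊆ M.E := hA.trans (hT.1 ▸ N.closure_subset_ground B)
    exact (hT.closure_subset_closure_of_not_spanning hAE hAs).trans
      (N.closure_subset_closure_of_subset_closure hA)
  eq_of_subset B B' hB hB' hB'B := by
    rw [closure_eq_closure_of_nr_le hB'B
      (by rw [nr_closure, hT.nr_eq_of_isBase hB, hT.nr_eq_of_isBase hB']), closure_closure]

lemma IsTruncationOf.closure_eq_of_isBase_subset (hT : IsTruncationOf M N)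
    (hmrk : mrk N = mrk M + 1) (hF : N.IsFlat F) (hFE : F ≠ M.E) (hB : M.IsBase B)
    (hBF : B ⊆ F) : N.closure B = F := by
  have hFs : ¬ N.Spanning F := fun hsp => hFE (by rw [← hF.closure, hsp.closure_eq, hT.1])
  have hlt : nr N F < mrk N :=
    (nr_le_mrk N F).lt_of_ne (mt (spanning_iff_nr_eq_mrk hF.subset_ground).2 hFs)
  rw [closure_eq_closure_of_nr_le hBF (by rw [hT.nr_eq_of_isBase hB]; omega), hF.closure]

end

/-- In the language of circuits: every element on a circuit inside `S` lies on a non-spanning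
circuit inside `S`. -/
def SpannedByNonspanning (M : Matroid α) (S : Set α) : Prop :=
  ∀ e ∈ S, e ∈ M.closure (S \ {e}) → ∃ X ⊆ S \ {e}, ¬ M.Spanning X ∧ e ∈ M.closure X

section SpannedByNonspanning

variable {M : Matroid α} {A B I S X Y : Set α} {e : α}

lemma Matroid.Indep.spannedByNonspanning (hI : M.Indep I) : SpannedByNonspanning M I :=
  fun _ he hecl => absurd hecl (hI.notMem_closure_sdiff_of_mem he)

lemma Matroid.IsBase.subset_closure_diff_singleton (hB : M.IsBase B) (he : e ∈ B)
    (hBS : B \ {e} ⊆ S) (hSE : S ⊆ M.E) (heS : e ∉ M.closure S) : S ⊆ M.closure (B \ {e}) := by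
  intro x hxS
  by_contra hx
  have hxe : x ∉ ({e} : Set α) := fun hxe => heS (hxe ▸ M.subset_closure S hSE hxS)
  have hxB : x ∉ B := fun hxB =>
    hx (M.subset_closure _ (sdiff_subset.trans hB.subset_ground) ⟨hxB, hxe⟩)
  have hI : M.Indep (insert x (B \ {e})) :=
    (hB.indep.sdiff _).insert_indep_iff.2 (Or.inl ⟨hSE hxS, hx⟩)
  have hB' := hB.exchange_isBase_of_indep hxB hI
  exact heS (M.closure_subset_closure (insert_subset hxS hBS)
    (hB'.closure_eq ▸ hB.subset_ground he))

lemma Matroid.IsBase.mem_closure_diff_singleton_of_union (hB : M.IsBase B) (hBX : B ⊆ X)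
    (hBY : B ⊆ Y) (hXE : X ⊆ M.E) (hYE : Y ⊆ M.E) (he : e ∈ X ∪ Y)
    (hecl : e ∈ M.closure ((X ∪ Y) \ {e})) :
    (e ∈ X ∧ e ∈ M.closure (X \ {e})) ∨ (e ∈ Y ∧ e ∈ M.closure (Y \ {e})) := by
  have heE : e ∈ M.E := M.mem_ground_of_mem_closure hecl
  by_cases heB : e ∈ B
  · by_contra! h
    have hX := hB.subset_closure_diff_singleton heB (sdiff_subset_sdiff_left hBX)
      (sdiff_subset.trans hXE) (h.1 (hBX heB))
    have hY := hB.subset_closure_diff_singleton heB (sdiff_subset_sdiff_left hBY)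
      (sdiff_subset.trans hYE) (h.2 (hBY heB))
    rw [union_sdiff_distrib] at hecl
    exact hB.indep.notMem_closure_sdiff_of_mem heB
      (M.closure_subset_closure_of_subset_closure (union_subset hX hY) hecl)
  have hspan : ∀ Z, B ⊆ Z → e ∈ M.closure (Z \ {e}) := fun Z hBZ =>
    M.closure_subset_closure (subset_sdiff_singleton hBZ heB) (hB.closure_eq ▸ heE)
  exact he.imp (fun heX => ⟨heX, hspan X hBX⟩) (fun heY => ⟨heY, hspan Y hBY⟩)

lemma SpannedByNonspanning.union (hX : SpannedByNonspanning M X) (hY : SpannedByNonspanning M Y)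
    (hB : M.IsBase B) (hBX : B ⊆ X) (hBY : B ⊆ Y) (hXE : X ⊆ M.E) (hYE : Y ⊆ M.E) :
    SpannedByNonspanning M (X ∪ Y) := by
  intro e he hecl
  obtain ⟨heX, hXe⟩ | ⟨heY, hYe⟩ := hB.mem_closure_diff_singleton_of_union hBX hBY hXE hYE he hecl
  · obtain ⟨Z, hZ, hZs, heZ⟩ := hX e heX hXe
    exact ⟨Z, hZ.trans (sdiff_subset_sdiff_left subset_union_left), hZs, heZ⟩
  · obtain ⟨Z, hZ, hZs, heZ⟩ := hY e heY hYe
    exact ⟨Z, hZ.trans (sdiff_subset_sdiff_left subset_union_right), hZs, heZ⟩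

lemma SpannedByNonspanning.union_closure (hS : SpannedByNonspanning M S) (hAS : A ⊆ S)
    (hSE : S ⊆ M.E) (hAs : ¬ M.Spanning A) : SpannedByNonspanning M (S ∪ M.closure A) := by
  set Q := M.closure A
  have hAQ : A ⊆ Q := M.subset_closure A (hAS.trans hSE)
  intro e he hecl
  by_cases heQ : e ∈ M.closure (Q \ {e})
  · refine ⟨Q \ {e}, sdiff_subset_sdiff_left subset_union_right, fun hsp => hAs ?_, heQ⟩
    rw [spanning_iff_closure_eq (hAS.trans hSE), ← closure_closure,
      (hsp.superset sdiff_subset (M.closure_subset_ground A)).closure_eq]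
  have hQe : Q \ {e} ⊆ M.closure (A \ {e}) := by
    intro f hf
    by_contra hfA
    have hfA' : f ∈ M.closure (insert e (A \ {e})) :=
      M.closure_subset_closure (subset_insert_sdiff_singleton e A) hf.1
    refine heQ (M.closure_subset_closure ?_ (closure_exchange ⟨hfA', hfA⟩).1)
    exact insert_subset hf (sdiff_subset_sdiff_left hAQ)
  have heS : e ∈ S := by
    by_contra heS
    have hAQe : A ⊆ Q \ {e} := subset_sdiff_singleton hAQ (fun heA => heS (hAS heA))
    exact heQ (M.closure_subset_closure hAQe (he.resolve_left heS))
  have hSe : e ∈ M.closure (S \ {e}) := by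
    refine M.closure_subset_closure_of_subset_closure ?_ hecl
    rw [union_sdiff_distrib]
    exact union_subset (M.subset_closure _ (sdiff_subset.trans hSE))
      (hQe.trans (M.closure_subset_closure (sdiff_subset_sdiff_left hAS)))
  obtain ⟨Z, hZ, hZs, heZ⟩ := hS e heS hSe
  exact ⟨Z, hZ.trans (sdiff_subset_sdiff_left subset_union_left), hZs, heZ⟩

end SpannedByNonspanning

def nonspanningCore (M : Matroid α) (h : Set α → Set α) (B : Set α) : Set α :=
  ⋃₀ {S | B ⊆ S ∧ S ⊆ h B ∧ SpannedByNonspanning M S}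

lemma subset_nonspanningCore {M : Matroid α} {h : Set α → Set α} {B S : Set α} (hBS : B ⊆ S)
    (hSh : S ⊆ h B) (hS : SpannedByNonspanning M S) : S ⊆ nonspanningCore M h B :=
  subset_sUnion_of_mem ⟨hBS, hSh, hS⟩

namespace IsBlockFunction

variable {M : Matroid α} [M.Finite] {h : Set α → Set α} {B : Set α}

lemma nonspanningCore_mem (hh : IsBlockFunction M h) (hB : M.IsBase B) :
    B ⊆ nonspanningCore M h B ∧ nonspanningCore M h B ⊆ h B ∧
      SpannedByNonspanning M (nonspanningCore M h B) := by
  have hhE := hh.subset_ground hB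
  set 𝒮 := {S | B ⊆ S ∧ S ⊆ h B ∧ SpannedByNonspanning M S}
  change sSup 𝒮 ∈ 𝒮
  refine SupClosed.sSup_mem_of_nonempty ?_ ?_
    ⟨B, show B ∈ 𝒮 from ⟨subset_rfl, hh.subset hB, hB.indep.spannedByNonspanning⟩⟩ subset_rfl
  · rintro S ⟨hBS, hSh, hS⟩ T ⟨hBT, hTh, hT⟩
    exact ⟨hBS.trans subset_union_left, union_subset hSh hTh,
      hS.union hT hB hBS hBT (hSh.trans hhE) (hTh.trans hhE)⟩
  · exact M.ground_finite.finite_subsets.subset fun S hS => hS.2.1.trans hhE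

lemma isBlockFunction_nonspanningCore (hh : IsBlockFunction M h) :
    IsBlockFunction M (nonspanningCore M h) where
  subset B hB := (hh.nonspanningCore_mem hB).1
  subset_ground B hB := (hh.nonspanningCore_mem hB).2.1.trans (hh.subset_ground hB)
  ne_ground B hB heq :=
    hh.ne_ground hB ((hh.subset_ground hB).antisymm (heq ▸ (hh.nonspanningCore_mem hB).2.1))
  closure_subset B A hB hA hAs := by
    obtain ⟨hBc, hch, hc⟩ := hh.nonspanningCore_mem hB
    refine subset_union_right.trans (subset_nonspanningCore (hBc.trans subset_union_left)
      (union_subset hch (hh.closure_subset hB (hA.trans hch) hAs)) ?_)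
    exact hc.union_closure hA (hch.trans (hh.subset_ground hB)) hAs
  eq_of_subset B B' hB hB' hB'B := by
    obtain ⟨hBc, hch, hc⟩ := hh.nonspanningCore_mem hB
    obtain ⟨-, hch', hc'⟩ := hh.nonspanningCore_mem hB'
    have hhB := hh.eq_of_subset hB hB' (hB'B.trans hch)
    have hsub : nonspanningCore M h B ⊆ nonspanningCore M h B' :=
      subset_nonspanningCore hB'B (hhB ▸ hch) hc
    exact (subset_nonspanningCore (hBc.trans hsub) (hhB ▸ hch') hc').antisymm hsub

end IsBlockFunction

section FreeErection

variable {M N : Matroid α} {h : Set α → Set α} {B F : Set α} {e : α}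

lemma IsErectionOf.ground_eq (hN : IsErectionOf N M) : N.E = M.E := by
  obtain rfl | hT := hN
  exacts [rfl, hT.1.symm]

lemma IsFreeErectionOf.closure_subset_of_isBlockFunction [M.Finite] (hN : IsFreeErectionOf N M)
    (hh : IsBlockFunction M h) (hB : M.IsBase B) : N.closure B ⊆ h B := by
  intro y hy
  by_contra hyh
  have hyE : y ∈ M.E := hN.1.ground_eq ▸ N.mem_ground_of_mem_closure hy
  have hyB := hN.2 _ (Or.inr hh.isTruncationOf_erection) _ (hh.erection_indep_insert hB hyE hyh)
  rw [(hN.2 M (Or.inl rfl) B hB.indep).insert_indep_iff_of_notMem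
    (hh.notMem_of_notMem_apply hB hyh)] at hyB
  exact hyB.2 hy

variable [M.Finite] [N.Finite]

lemma IsFreeErectionOf.spannedByNonspanning_closure (hN : IsFreeErectionOf N M)
    (hT : IsTruncationOf M N) (hmrk : mrk N = mrk M + 1) (hB : M.IsBase B) :
    SpannedByNonspanning M (N.closure B) := by
  have hcl := hT.isBlockFunction_closure hmrk
  obtain ⟨-, hcore, hP⟩ := hcl.nonspanningCore_mem hB
  have hcl_core := hN.closure_subset_of_isBlockFunction hcl.isBlockFunction_nonspanningCore hB
  rwa [hcore.antisymm hcl_core] at hP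

lemma IsFreeErectionOf.exists_isCircuit_closure_subset (hN : IsFreeErectionOf N M)
    (hT : IsTruncationOf M N) (hmrk : mrk N = mrk M + 1) (hF : N.IsFlat F) (hFc : Cyclic N F)
    (hFE : F ≠ M.E) (he : e ∈ F) : ∃ C, M.IsCircuit C ∧ e ∈ C ∧ M.closure C ⊆ F := by
  have hFE' : F ⊆ M.E := hT.1 ▸ hF.subset_ground
  obtain ⟨X, hXF, hXs, heX⟩ : ∃ X ⊆ F \ {e}, ¬ M.Spanning X ∧ e ∈ M.closure X := by
    have hecl := hT.closure_subset_closure (sdiff_subset.trans hFE')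
      (hFc.mem_closure_diff_singleton he)
    by_cases hFs : M.Spanning F
    · obtain ⟨B, hB, hBF⟩ := hFs.exists_isBase_subset
      rw [← hT.closure_eq_of_isBase_subset hmrk hF hFE hB hBF] at he hecl ⊢
      exact hN.spannedByNonspanning_closure hT hmrk hB e he hecl
    · exact ⟨F \ {e}, subset_rfl, fun hsp => hFs (hsp.superset sdiff_subset hFE'), hecl⟩
  have hXE : X ⊆ M.E := hXF.trans (sdiff_subset.trans hFE')
  obtain ⟨C, hCX, hC, heC⟩ := exists_isCircuit_of_mem_closure heX (fun heX' => (hXF heX').2 rfl)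
  refine ⟨C, hC, heC, ?_⟩
  calc M.closure C ⊆ M.closure X :=
        M.closure_subset_closure_of_subset_closure
          (hCX.trans (insert_subset heX (M.subset_closure X hXE)))
    _ ⊆ N.closure X := hT.closure_subset_closure_of_not_spanning hXE hXs
    _ ⊆ F := hF.closure ▸ N.closure_subset_closure (hXF.trans sdiff_subset)

end FreeErection

theorem cyclicFlat_union_of_freeErection_general [Fintype α] (M N : Matroid α)
    (𝓒 : Set (Set α))
    (hN : IsFreeErectionOf N M)
    (hM : ∀ F, M.IsFlat F → Cyclic M F → ∀ e ∈ F, ∃ C ∈ 𝓒, C ⊆ F ∧ e ∈ C) :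
    ∀ F, N.IsFlat F → Cyclic N F → ∀ e ∈ F, ∃ C ∈ 𝓒, C ⊆ F ∧ e ∈ C := by
  rcases hN.1 with rfl | hT
  · exact hM
  rcases hT.eq_or_mrk_eq with rfl | hmrk
  · exact hM
  intro F hF hFc e he
  by_cases hFE : F = M.E
  · subst hFE
    exact hM M.E M.ground_isFlat hT.cyclic_ground e he
  obtain ⟨C, hC, heC, hCF⟩ := hN.exists_isCircuit_closure_subset hT hmrk hF hFc hFE he
  obtain ⟨C', hC', hC'C, heC'⟩ :=
    hM _ (M.isFlat_closure C) hC.cyclic_closure e (M.subset_closure C hC.subset_ground heC)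
  exact ⟨C', hC', hC'C.trans hCF, heC'⟩

/-- Let `𝓒` be a family of non-spanning circuits of `M` and let `N` be
the free erection of `M`. If every cyclic flat of `M` is a union of circuits in `𝓒`,
then every cyclic flat of `N` is a union of circuits in `𝓒`. -/
theorem cyclicFlat_union_of_freeErection [Fintype α] (M N : Matroid α)
    (𝓒 : Set (Set α)) (h𝓒 : ∀ C ∈ 𝓒, _root_.IsCircuit M C ∧ ¬ M.Spanning C)
    (hN : IsFreeErectionOf N M)
    (hM : ∀ F, M.IsFlat F → Cyclic M F → ∀ e ∈ F, ∃ C ∈ 𝓒, C ⊆ F ∧ e ∈ C) :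
    ∀ F, N.IsFlat F → Cyclic N F → ∀ e ∈ F, ∃ C ∈ 𝓒, C ⊆ F ∧ e ∈ C :=
  cyclicFlat_union_of_freeErection_general M N 𝓒 hN hM
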